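/- Let U ≥ 1 and D > 1, and let μ ∈ ℝ, σ² ∈ ℝ satisfy |μ| ≤ U and D⁻¹ ≤ σ² ≤ D. Then the symmetric 2×2 matrix H = σ⁻⁴·[[2μ² + σ², −μ], [−μ, 1/2]] satisfies, for all v ∈ ℝ², (1/(D·(4U² + 2D + 1)))·‖v‖² ≤ vᵀ H v ≤ (9/2)·U²·D²·‖v‖². Consequently the mirror map A*, whose Hessian on Ω̃ is the block-diagonal matrix with these 2×2 blocks (one per coordinate, with μ = ξ_i, σ² = Ξ_ii − ξ_i²), is C_S-strongly convex and C_L-smooth with respect to the Euclidean norm on Ω̃, where C_S = (D(4U² + 2D + 1))⁻¹ and C_L = (9/2)U²D². -/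

import Mathlib

open MeasureTheory

noncomputable section

/-- The space of mean-field expectation parameters `ω = (ξ, Ξ) ∈ ℝ^d × ℝ^d`,
realized as a Euclidean space indexed by `Fin d ⊕ Fin d`. -/
abbrev MFParam (d : ℕ) := EuclideanSpace ℝ (Fin d ⊕ Fin d)

def xiP {d : ℕ} (ω : MFParam d) (i : Fin d) : ℝ := ω (Sum.inl i)

def XiP {d : ℕ} (ω : MFParam d) (i : Fin d) : ℝ := ω (Sum.inr i)

def varP {d : ℕ} (ω : MFParam d) (i : Fin d) : ℝ := XiP ω i - (xiP ω i) ^ 2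

/-- The bounded parameter domain `Ω̃`. -/
def OmegaT (d : ℕ) (U D : ℝ) : Set (MFParam d) :=
  {ω | ∀ i, |xiP ω i| ≤ U ∧ D⁻¹ ≤ varP ω i ∧ varP ω i ≤ D}

/-- The `2 × 2` Hessian block `H = σ⁻⁴ [[2μ² + σ², −μ], [−μ, 1/2]]` of the mirror map. -/
def hessBlock (μ σ2 : ℝ) : Matrix (Fin 2) (Fin 2) ℝ :=
  (σ2 ^ 2)⁻¹ • !![2 * μ ^ 2 + σ2, -μ; -μ, 1 / 2]

/-- The quadratic form of the block-diagonal Hessian `∇²A*(ω)` of the mirror map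
`A*(ξ,Ξ) = −(1/2)∑ᵢ log(Ξ_ii − ξ_i²)`, evaluated at `v ∈ ℝ^{2d}`. -/
def hessQuadForm {d : ℕ} (ω : MFParam d) (v : MFParam d) : ℝ :=
  ∑ i : Fin d, ((varP ω i) ^ 2)⁻¹ *
    ((2 * (xiP ω i) ^ 2 + varP ω i) * (v (Sum.inl i)) ^ 2
      - 2 * xiP ω i * v (Sum.inl i) * v (Sum.inr i) + (1 / 2) * (v (Sum.inr i)) ^ 2)

/-!
Completing the square, the quadratic form of a block at `(a, b)` is
`a²/σ² + 2(μa - b/2)²/σ⁴`. For `σ² ∈ [D⁻¹, D]` the two weights lie in `[D⁻¹, D]` and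
`[D⁻², D²]`, and a weighted Young inequality between `b` and `μa - b/2` (using `|μ| ≤ U`)
compares the result with `a² + b²` from both sides. The Hessian of `A*` is block diagonal, so
summing the block bounds over the coordinates gives the Euclidean bounds on `Ω̃`.
-/

def hessBlockQuad (μ s a b : ℝ) : ℝ :=
  (s ^ 2)⁻¹ * ((2 * μ ^ 2 + s) * a ^ 2 - 2 * μ * a * b + 1 / 2 * b ^ 2)

theorem dotProduct_hessBlock_mulVec (μ s : ℝ) (v : Fin 2 → ℝ) :
    dotProduct v ((hessBlock μ s).mulVec v) = hessBlockQuad μ s (v 0) (v 1) := by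
  simp only [dotProduct, Matrix.mulVec, hessBlock, Matrix.smul_apply, Matrix.of_apply,
    Matrix.cons_val', Matrix.cons_val_fin_one, smul_eq_mul, Fin.sum_univ_two, Matrix.cons_val_zero,
    Matrix.cons_val_one, hessBlockQuad]
  ring

theorem hessQuadForm_eq_sum_hessBlockQuad {d : ℕ} (ω v : MFParam d) :
    hessQuadForm ω v = ∑ i, hessBlockQuad (xiP ω i) (varP ω i) (v (Sum.inl i)) (v (Sum.inr i)) :=
  rfl

theorem hessBlockQuad_eq (μ a b : ℝ) {s : ℝ} (hs : s ≠ 0) :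
    hessBlockQuad μ s a b = s⁻¹ * a ^ 2 + 2 * (s ^ 2)⁻¹ * (μ * a - b / 2) ^ 2 := by
  unfold hessBlockQuad
  field_simp
  ring

section Bounds

variable {U D μ s : ℝ}

theorem hessBlockQuad_lower_bound (hD : 0 < D) (hμ : |μ| ≤ U) (h₁ : D⁻¹ ≤ s) (h₂ : s ≤ D)
    (a b : ℝ) :
    1 / (D * (4 * U ^ 2 + 2 * D + 1)) * (a ^ 2 + b ^ 2) ≤ hessBlockQuad μ s a b := by
  have hs : 0 < s := (inv_pos.2 hD).trans_le h₁
  have hμU : μ ^ 2 ≤ U ^ 2 := sq_le_sq' (abs_le.1 hμ).1 (abs_le.1 hμ).2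
  have hK : 0 < 4 * U ^ 2 + 2 * D + 1 := by positivity
  set K := 4 * U ^ 2 + 2 * D + 1
  -- with `c = μa - b/2`, the difference of the two sides is
  -- `4D(U² - μ²)a² + 2(Da + 2μc)² + 8(U² - μ²)c² + 2c²`
  have hyoung : D * (a ^ 2 + b ^ 2) ≤ D * K * a ^ 2 + 2 * K * (μ * a - b / 2) ^ 2 := by
    nlinarith [mul_nonneg (mul_nonneg hD.le (sub_nonneg.2 hμU)) (sq_nonneg a),
      sq_nonneg (D * a + 2 * μ * (μ * a - b / 2)),
      mul_nonneg (sub_nonneg.2 hμU) (sq_nonneg (μ * a - b / 2)), sq_nonneg (μ * a - b / 2)]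
  calc 1 / (D * K) * (a ^ 2 + b ^ 2) = D * (a ^ 2 + b ^ 2) / (D ^ 2 * K) := by
        field_simp
    _ ≤ (D * K * a ^ 2 + 2 * K * (μ * a - b / 2) ^ 2) / (D ^ 2 * K) := by gcongr
    _ = D⁻¹ * a ^ 2 + 2 * (D ^ 2)⁻¹ * (μ * a - b / 2) ^ 2 := by field_simp
    _ ≤ s⁻¹ * a ^ 2 + 2 * (s ^ 2)⁻¹ * (μ * a - b / 2) ^ 2 := by gcongr
    _ = hessBlockQuad μ s a b := (hessBlockQuad_eq μ a b hs.ne').symm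

theorem hessBlockQuad_upper_bound (hU : 1 ≤ U) (hD : 1 ≤ D) (hμ : |μ| ≤ U) (h₁ : D⁻¹ ≤ s)
    (a b : ℝ) :
    hessBlockQuad μ s a b ≤ 9 / 2 * U ^ 2 * D ^ 2 * (a ^ 2 + b ^ 2) := by
  have hD₀ : 0 < D := zero_lt_one.trans_le hD
  have hs : 0 < s := (inv_pos.2 hD₀).trans_le h₁
  have hμU : μ ^ 2 ≤ U ^ 2 := sq_le_sq' (abs_le.1 hμ).1 (abs_le.1 hμ).2
  have hD_le : D ≤ 9 / 4 * U ^ 2 * D ^ 2 := by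
    nlinarith [one_le_pow₀ (n := 2) hU, le_self_pow₀ hD two_ne_zero]
  calc hessBlockQuad μ s a b = s⁻¹ * a ^ 2 + 2 * s⁻¹ ^ 2 * (μ * a - b / 2) ^ 2 := by
        rw [hessBlockQuad_eq μ a b hs.ne', inv_pow]
    _ ≤ D * a ^ 2 + 2 * D ^ 2 * (μ * a - b / 2) ^ 2 := by
        have : s⁻¹ ≤ D := inv_le_of_inv_le₀ hD₀ h₁
        gcongr
    -- Young's inequality `(x - y)² ≤ (9/8) x² + 9 y²`, whose defect is `(x + 8y)²/8`
    _ ≤ 9 / 2 * U ^ 2 * D ^ 2 * (a ^ 2 + b ^ 2) := by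
        nlinarith [mul_nonneg (mul_nonneg (sq_nonneg D) (sub_nonneg.2 hμU)) (sq_nonneg a),
          mul_nonneg (sub_nonneg.2 hD_le) (sq_nonneg a),
          mul_nonneg (mul_nonneg (sq_nonneg D) (sub_nonneg.2 (one_le_pow₀ (n := 2) hU)))
            (sq_nonneg b),
          sq_nonneg (D * (μ * a + 4 * b))]

end Bounds

theorem mirror_map_strongly_convex_and_smooth_general
    {d : ℕ} (U D : ℝ) (hU : 1 ≤ U) (hD : 1 < D) :
    (∀ (μ σ2 : ℝ), |μ| ≤ U → D⁻¹ ≤ σ2 → σ2 ≤ D → ∀ v : Fin 2 → ℝ,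
      (1 / (D * (4 * U ^ 2 + 2 * D + 1))) * (v 0 ^ 2 + v 1 ^ 2)
          ≤ dotProduct v ((hessBlock μ σ2).mulVec v) ∧
      dotProduct v ((hessBlock μ σ2).mulVec v)
          ≤ (9 / 2) * U ^ 2 * D ^ 2 * (v 0 ^ 2 + v 1 ^ 2)) ∧
    (∀ ω ∈ OmegaT d U D, ∀ v : MFParam d,
      (1 / (D * (4 * U ^ 2 + 2 * D + 1))) * ‖v‖ ^ 2 ≤ hessQuadForm ω v ∧
      hessQuadForm ω v ≤ (9 / 2) * U ^ 2 * D ^ 2 * ‖v‖ ^ 2) := by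
  have hD₀ : 0 < D := zero_lt_one.trans hD
  have hblock : ∀ μ σ2, |μ| ≤ U → D⁻¹ ≤ σ2 → σ2 ≤ D → ∀ a b : ℝ,
      1 / (D * (4 * U ^ 2 + 2 * D + 1)) * (a ^ 2 + b ^ 2) ≤ hessBlockQuad μ σ2 a b ∧
        hessBlockQuad μ σ2 a b ≤ 9 / 2 * U ^ 2 * D ^ 2 * (a ^ 2 + b ^ 2) :=
    fun μ σ2 hμ h₁ h₂ a b =>
      ⟨hessBlockQuad_lower_bound hD₀ hμ h₁ h₂ a b, hessBlockQuad_upper_bound hU hD.le hμ h₁ a b⟩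
  refine ⟨fun μ σ2 hμ h₁ h₂ v => ?_, fun ω hω v => ?_⟩
  · rw [dotProduct_hessBlock_mulVec]
    exact hblock μ σ2 hμ h₁ h₂ (v 0) (v 1)
  · have hnorm : ‖v‖ ^ 2 = ∑ i, (v (Sum.inl i) ^ 2 + v (Sum.inr i) ^ 2) := by
      rw [EuclideanSpace.real_norm_sq_eq, Fintype.sum_sum_type, Finset.sum_add_distrib]
    rw [hnorm, hessQuadForm_eq_sum_hessBlockQuad, Finset.mul_sum, Finset.mul_sum]
    constructor <;> refine Finset.sum_le_sum fun i _ => ?_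
    · exact (hblock _ _ (hω i).1 (hω i).2.1 (hω i).2.2 _ _).1
    · exact (hblock _ _ (hω i).1 (hω i).2.1 (hω i).2.2 _ _).2

/-- Lemma C.1, Euclidean strong convexity and smoothness of the mirror
map `A*` on `Ω̃`: each Hessian block satisfies
`C_S ‖v‖² ≤ vᵀ H v ≤ C_L ‖v‖²` with `C_S = (D(4U² + 2D + 1))⁻¹`, `C_L = (9/2)U²D²`;
consequently the block-diagonal Hessian quadratic form of `A*` obeys the same bounds at
every point of `Ω̃`, i.e. `A*` is `C_S`-strongly convex and `C_L`-smooth in the Euclidean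
norm on `Ω̃`. -/
theorem mirror_map_strongly_convex_and_smooth
    {d : ℕ} (hd : 1 ≤ d) (U D : ℝ) (hU : 1 ≤ U) (hD : 1 < D) :
    (∀ (μ σ2 : ℝ), |μ| ≤ U → D⁻¹ ≤ σ2 → σ2 ≤ D → ∀ v : Fin 2 → ℝ,
      (1 / (D * (4 * U ^ 2 + 2 * D + 1))) * (v 0 ^ 2 + v 1 ^ 2)
          ≤ dotProduct v ((hessBlock μ σ2).mulVec v) ∧
      dotProduct v ((hessBlock μ σ2).mulVec v)
          ≤ (9 / 2) * U ^ 2 * D ^ 2 * (v 0 ^ 2 + v 1 ^ 2)) ∧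
    (∀ ω ∈ OmegaT d U D, ∀ v : MFParam d,
      (1 / (D * (4 * U ^ 2 + 2 * D + 1))) * ‖v‖ ^ 2 ≤ hessQuadForm ω v ∧
      hessQuadForm ω v ≤ (9 / 2) * U ^ 2 * D ^ 2 * ‖v‖ ^ 2) :=
  mirror_map_strongly_convex_and_smooth_general U D hU hD

end
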